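/- Let S be a set of Boolean functions f : {0,1}^n → {0,1}, and let m, k ≥ 1 be integers. Suppose that for every f ∈ S there exist certificates C₁, …, C_m on {0,1}^n, each of size at most k, such that each S[C_i] is nonempty and such that for every choice of f₁ ∈ S[C₁], …, f_m ∈ S[C_m] and every x ∈ {0,1}^n, strictly more than m/2 of the values f₁(x), …, f_m(x) equal f(x). Then |S| ≤ 2^((n+1)·k·m + m). -/
import Mathlib


/-- The Boolean cube `{0,1}^n`. -/
abbrev Cube (n : ℕ) := Fin n → Bool

/-- The size of a certificate (partial Boolean function): the number of inputs
on which it is defined. -/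
def certSize {n : ℕ} (C : Cube n → Option Bool) : ℕ :=
  (Finset.univ.filter (fun x => (C x).isSome)).card

/-- A Boolean function is consistent with a certificate if it agrees with it
wherever the certificate is defined. -/
def Consistent {n : ℕ} (f : Cube n → Bool) (C : Cube n → Option Bool) : Prop :=
  ∀ x b, C x = some b → f x = b

def supp {n : ℕ} (C : Cube n → Option Bool) : Finset (Cube n) :=
  Finset.univ.filter (fun x => (C x).isSome)

noncomputable def pick {n : ℕ} (k : ℕ) (C : Cube n → Option Bool)
    (h : (supp C).Nonempty) : Fin k → Cube n :=
  fun i => if hi : (i : ℕ) < (supp C).card then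
    ((supp C).equivFin.symm ⟨i, hi⟩ : Cube n) else h.choose

lemma pick_mem {n k : ℕ} (C : Cube n → Option Bool) (h : (supp C).Nonempty)
    (i : Fin k) : pick k C h i ∈ supp C := by
  unfold pick
  split
  · exact ((supp C).equivFin.symm _).2
  · exact h.choose_spec

lemma pick_surj {n k : ℕ} (C : Cube n → Option Bool) (h : (supp C).Nonempty)
    (hk : (supp C).card ≤ k) {x : Cube n} (hx : x ∈ supp C) :
    ∃ i : Fin k, pick k C h i = x := by
  set j := (supp C).equivFin ⟨x, hx⟩ with hj
  refine ⟨⟨j.val, lt_of_lt_of_le j.isLt hk⟩, ?_⟩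
  unfold pick
  rw [dif_pos j.isLt]
  have : (⟨(j:ℕ), j.isLt⟩ : Fin (supp C).card) = j := rfl
  rw [this, hj, Equiv.symm_apply_apply]

noncomputable def enc {n : ℕ} (k : ℕ) (C : Cube n → Option Bool) :
    Option (Fin k → Cube n × Bool) :=
  if h : (supp C).Nonempty then
    some (fun i => (pick k C h i, (C (pick k C h i)).getD false))
  else none

noncomputable def dec {n k : ℕ} : Option (Fin k → Cube n × Bool) → Cube n → Option Bool
  | none => fun _ => none
  | some t => fun x => if h : ∃ i, (t i).1 = x then some (t h.choose).2 else none

lemma mem_supp_iff {n : ℕ} (C : Cube n → Option Bool) (x : Cube n) :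
    x ∈ supp C ↔ (C x).isSome := by simp [supp]

lemma dec_enc {n k : ℕ} (C : Cube n → Option Bool) (hk : certSize C ≤ k) :
    dec (enc k C) = C := by
  unfold enc
  split
  · next h =>
    funext x
    simp only [dec]
    by_cases hx : x ∈ supp C
    · have hex : ∃ i : Fin k, ((fun i => (pick k C h i, (C (pick k C h i)).getD false)) i).1 = x :=
        pick_surj C h hk hx
      rw [dif_pos hex]
      have h1 : pick k C h hex.choose = x := hex.choose_spec
      obtain ⟨b, hb⟩ := Option.isSome_iff_exists.mp ((mem_supp_iff C x).mp hx)
      simp only [h1, hb]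
      rfl
    · rw [dif_neg]
      · obtain hcx := (mem_supp_iff C x).not.mp hx
        exact (Option.not_isSome_iff_eq_none.mp hcx).symm
      · rintro ⟨i, hi⟩
        exact hx (hi ▸ pick_mem C h i)
  · next h =>
    funext x
    simp only [dec]
    have hx : x ∉ supp C := fun hx => h ⟨x, hx⟩
    exact ((Option.not_isSome_iff_eq_none.mp ((mem_supp_iff C x).not.mp hx))).symm

lemma enc_inj {n k : ℕ} {C C' : Cube n → Option Bool} (hC : certSize C ≤ k)
    (hC' : certSize C' ≤ k) (h : enc k C = enc k C') : C = C' := by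
  rw [← dec_enc C hC, ← dec_enc C' hC', h]

/-- If every `f ∈ S` is determined as the pointwise majority of any functions
consistent with `m` certificates of size at most `k` (each consistent with some
member of `S`), then `|S| ≤ 2^((n+1)km + m)`. -/
theorem majority_isolatable_implies_small (n m k : ℕ) (hm : 1 ≤ m) (hk : 1 ≤ k)
    (S : Set (Cube n → Bool))
    (hmaj : ∀ f ∈ S, ∃ C : Fin m → Cube n → Option Bool,
      (∀ i, certSize (C i) ≤ k) ∧
      (∀ i, ∃ g ∈ S, Consistent g (C i)) ∧
      ∀ fs : Fin m → Cube n → Bool,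
        (∀ i, fs i ∈ S ∧ Consistent (fs i) (C i)) →
        ∀ x : Cube n,
          (m : ℝ) / 2 <
            ((Finset.univ.filter (fun i : Fin m => fs i x = f x)).card : ℝ)) :
    S.ncard ≤ 2 ^ ((n + 1) * k * m + m) := by
  classical
  choose C hCk hCg hCmaj using hmaj
  choose g hgS hgC using hCg
  have hinj : ∀ (f : Cube n → Bool) (hf : f ∈ S) (f' : Cube n → Bool) (hf' : f' ∈ S),
      (fun i => enc k (C f hf i)) = (fun i => enc k (C f' hf' i)) → f = f' := by
    intro f hf f' hf' he
    have hCeq : C f hf = C f' hf' := by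
      funext i
      exact enc_inj (hCk f hf i) (hCk f' hf' i) (congrFun he i)
    set fs : Fin m → Cube n → Bool := fun i => g f hf i with hfsdef
    have hfs : ∀ i, fs i ∈ S ∧ Consistent (fs i) (C f hf i) :=
      fun i => ⟨hgS f hf i, hgC f hf i⟩
    have hfs' : ∀ i, fs i ∈ S ∧ Consistent (fs i) (C f' hf' i) := by
      rw [← hCeq]; exact hfs
    funext x
    by_contra hne
    have h1 := hCmaj f hf fs hfs x
    have h2 := hCmaj f' hf' fs hfs' x
    set A := Finset.univ.filter (fun i : Fin m => fs i x = f x) with hA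
    set B := Finset.univ.filter (fun i : Fin m => fs i x = f' x) with hB
    have hd : Disjoint A B := by
      rw [Finset.disjoint_left]
      intro i hiA hiB
      rw [hA, Finset.mem_filter] at hiA
      rw [hB, Finset.mem_filter] at hiB
      exact hne (hiA.2 ▸ hiB.2)
    have hcard : A.card + B.card ≤ m := by
      rw [← Finset.card_union_of_disjoint hd]
      calc (A ∪ B).card ≤ Finset.univ.card := Finset.card_le_univ _
        _ = m := Finset.card_fin m
    have hlt : (m : ℝ) < (A.card : ℝ) + (B.card : ℝ) := by linarith
    have : (m : ℝ) < ((A.card + B.card : ℕ) : ℝ) := by push_cast; linarith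
    have := Nat.cast_lt.mp this
    omega
  let T := Fin m → Option (Fin k → Cube n × Bool)
  let Ψ : S → T := fun f => fun i => enc k (C f.1 f.2 i)
  have hΨ : Function.Injective Ψ := by
    rintro ⟨f, hf⟩ ⟨f', hf'⟩ h
    exact Subtype.ext (hinj f hf f' hf' h)
  have h1 : S.ncard ≤ Nat.card T := by
    rw [← Nat.card_coe_set_eq]
    exact Nat.card_le_card_of_injective Ψ hΨ
  have h2 : Nat.card T = ((2 ^ n * 2) ^ k + 1) ^ m := by
    simp [T, Nat.card_eq_fintype_card]
  have h3 : ((2 ^ n * 2) ^ k + 1) ^ m ≤ 2 ^ ((n + 1) * k * m + m) := by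
    have e1 : (2 ^ n * 2 : ℕ) = 2 ^ (n + 1) := by ring
    have e2 : ((2 ^ n * 2 : ℕ)) ^ k = 2 ^ ((n + 1) * k) := by
      rw [e1, ← pow_mul]
    have e3 : (2 : ℕ) ^ ((n + 1) * k) + 1 ≤ 2 ^ ((n + 1) * k + 1) := by
      rw [pow_succ]
      have : 1 ≤ (2 : ℕ) ^ ((n + 1) * k) := Nat.one_le_two_pow
      omega
    calc ((2 ^ n * 2) ^ k + 1) ^ m = (2 ^ ((n + 1) * k) + 1) ^ m := by rw [e2]
      _ ≤ (2 ^ ((n + 1) * k + 1)) ^ m := Nat.pow_le_pow_left e3 m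
      _ = 2 ^ (((n + 1) * k + 1) * m) := by rw [← pow_mul]
      _ = 2 ^ ((n + 1) * k * m + m) := by ring_nf
  omega
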